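/- arXiv:math/0112284 — 2 statements merged into one kernel-verified Lean document; each statement's English description precedes it below -/
import Mathlib

section
/- (Lemma 1) For all 1 ≤ j < i ≤ d one has (1 − t_1 t_1^* − ⋯ − t_j t_j^*) a_i^{(j)} = a_i^{(j+1)}, i.e. P_j a_i^{(j)} = a_i^{(j+1)}. -/
/-!
For `1 ≤ k < m ≤ i` one has `t_k^* a_i^{(m)} = 0`:
for `m = i` because `t_k^* t_i = 0` forces `t_k^* T_i^2 = 0` and hence (C*-identity) `t_k^* T_i = 0`;
for `m < i` because every term of the series for `a_i^{(m)}` either starts with `t_m` or is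
`a_i^{(m+1)}`. Consequently `P_j a_i^{(j+1)} = a_i^{(j+1)}`, while `P_j t_j = t_j Q_j` with
`Q_j = ∑_{k<j} t_k t_k^*` annihilating both `t_j` and `a_i^{(j+1)}`, so `P_j` kills every term
`n ≥ 1` of the series for `a_i^{(j)}` and fixes the term `n = 0`.
-/

open Finset

theorem HasSum.mul_left_eq_zero {ι R : Type*} [NonUnitalNonAssocSemiring R] [TopologicalSpace R]
    [IsTopologicalSemiring R] [T2Space R] {f : ι → R} {x c : R} (hf : HasSum f x)
    (hc : ∀ n, c * f n = 0) : c * x = 0 :=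
  (hf.mul_left c).unique (by simpa only [hc] using hasSum_zero)

theorem IsSelfAdjoint.mul_eq_zero_of_mul_sq_eq_zero {A : Type*} [NormedRing A] [StarRing A]
    [CStarRing A] {s x : A} (hx : IsSelfAdjoint x) (h : s * x ^ 2 = 0) : s * x = 0 := by
  have hstar : star (x * star s) = s * x := by rw [star_mul, star_star, hx.star_eq]
  have : star (x * star s) * (x * star s) = 0 := by
    rw [hstar, ← mul_assoc, mul_assoc s, ← sq, h, zero_mul]
  rw [← hstar, (CStarRing.star_mul_self_eq_zero_iff _).mp this, star_zero]

section ConjugationSeries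

variable {R A : Type*} [CommSemiring R] [Ring A] [Algebra R A] [StarRing A] [TopologicalSpace A]
  [IsTopologicalRing A] [T2Space A] {μ : R} {x b c : A}

theorem mul_eq_zero_of_hasSum_conj {s : A}
    (h : HasSum (fun n : ℕ => μ ^ n • (x ^ n * b * star (x ^ n))) c)
    (hsx : s * x = 0) (hsb : s * b = 0) : s * c = 0 :=
  h.mul_left_eq_zero fun n => by
    cases n with
    | zero => simp [hsb]
    | succ n => rw [mul_smul_comm, pow_succ' x n, mul_assoc x, mul_assoc x, ← mul_assoc s, hsx,
        zero_mul, smul_zero]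

theorem mul_eq_of_hasSum_conj {p q : A}
    (h : HasSum (fun n : ℕ => μ ^ n • (x ^ n * b * star (x ^ n))) c)
    (hpb : p * b = b) (hpx : p * x = x * q) (hqb : q * b = 0) (hqx : q * x = 0) : p * c = b := by
  have hq : ∀ n, q * (x ^ n * b) = 0 := fun n => by
    cases n with
    | zero => rw [pow_zero, one_mul, hqb]
    | succ n => rw [pow_succ', ← mul_assoc, ← mul_assoc, hqx, zero_mul, zero_mul]
  have hterm : ∀ n : ℕ, p * (μ ^ n • (x ^ n * b * star (x ^ n))) = if n = 0 then b else 0 := by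
    intro n
    cases n with
    | zero => simpa using hpb
    | succ n =>
      rw [if_neg n.succ_ne_zero, mul_smul_comm, pow_succ' x n, mul_assoc x, mul_assoc x,
        ← mul_assoc p, hpx, mul_assoc x, ← mul_assoc q, hq, zero_mul, mul_zero, smul_zero]
  exact (h.mul_left p).unique (by simpa only [hterm] using hasSum_ite_eq 0 b)

end ConjugationSeries

section Isometries

variable {A : Type*} [CStarAlgebra A] {d : ℕ} {μ : ℝ} {t : ℕ → A}

theorem sum_mul_star_mul_eq_zero {s : Finset ℕ} {y : A} (h : ∀ k ∈ s, star (t k) * y = 0) :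
    (∑ k ∈ s, t k * star (t k)) * y = 0 := by
  rw [sum_mul]
  exact sum_eq_zero fun k hk => by rw [mul_assoc, h k hk, mul_zero]

theorem mul_sqrt_eq_zero_of_mul_eq_zero {T s x : A} (hT : IsSelfAdjoint T)
    (hTsq : HasSum (fun n : ℕ => μ ^ (2 * n) • (x ^ (n + 1) * star (x ^ (n + 1)))) (T ^ 2))
    (hsx : s * x = 0) : s * T = 0 :=
  hT.mul_eq_zero_of_mul_sq_eq_zero <| hTsq.mul_left_eq_zero fun n => by
    rw [mul_smul_comm, pow_succ' x n, mul_assoc x, ← mul_assoc s, hsx, zero_mul, smul_zero]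

theorem star_mul_a_eq_zero {T : ℕ → A} {a : ℕ → ℕ → A}
    (rel1 : ∀ i j, 1 ≤ i → i ≤ d → 1 ≤ j → j ≤ d → i ≠ j → star (t i) * t j = 0)
    (hT : ∀ i, 1 ≤ i → i ≤ d → IsSelfAdjoint (T i))
    (hTsq : ∀ i, 1 ≤ i → i ≤ d →
      HasSum (fun n : ℕ => μ ^ (2 * n) • ((t i) ^ (n + 1) * star ((t i) ^ (n + 1))))
        (T i ^ 2))
    (haii : ∀ i, 1 ≤ i → i ≤ d → a i i = T i * t i)
    (haij : ∀ i j, 1 ≤ j → j < i → i ≤ d →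
      HasSum (fun n : ℕ => μ ^ n • ((t j) ^ n * a i (j + 1) * star ((t j) ^ n)))
        (a i j))
    {i m : ℕ} (hmi : m ≤ i) (hid : i ≤ d) :
    ∀ k, 1 ≤ k → k < m → star (t k) * a i m = 0 := by
  induction hmi using Nat.decreasingInduction with
  | self =>
    intro k hk hki
    have hi : 1 ≤ i := by omega
    rw [haii i hi hid, ← mul_assoc, mul_sqrt_eq_zero_of_mul_eq_zero (hT i hi hid) (hTsq i hi hid)
      (rel1 k i hk (by omega) hi hid hki.ne), zero_mul]
  | of_succ m hmi ih =>
    intro k hk hkm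
    exact mul_eq_zero_of_hasSum_conj (haij i m (by omega) hmi hid)
      (rel1 k m hk (by omega) (by omega) (by omega) hkm.ne) (ih k hk (by omega))

theorem P_mul_t_eq {P : ℕ → A}
    (rel1 : ∀ i j, 1 ≤ i → i ≤ d → 1 ≤ j → j ≤ d → i ≠ j → star (t i) * t j = 0)
    (rel2 : ∀ i, 1 ≤ i → i ≤ d →
      star (t i) * t i = 1 - ∑ k ∈ Finset.Ico 1 i, t k * star (t k))
    (hP : ∀ j, P j = 1 - ∑ k ∈ Finset.Icc 1 j, t k * star (t k))
    {j : ℕ} (hj : 1 ≤ j) (hjd : j ≤ d) :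
    P j * t j = t j * ∑ k ∈ Ico 1 j, t k * star (t k) := by
  have hsingle : (∑ k ∈ Icc 1 j, t k * star (t k)) * t j = t j * (star (t j) * t j) := by
    rw [sum_mul, sum_eq_single_of_mem j (mem_Icc.mpr ⟨hj, le_rfl⟩), mul_assoc]
    intro k hk hkj
    rw [mem_Icc] at hk
    rw [mul_assoc, rel1 k j hk.1 (by omega) hj hjd hkj, mul_zero]
  rw [hP, sub_mul, one_mul, hsingle, rel2 j hj hjd, mul_sub, mul_one, sub_sub_cancel]

end Isometries

theorem P_mul_a_lemma1_general {A : Type*} [CStarAlgebra A] [PartialOrder A] [StarOrderedRing A]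
    {d : ℕ} {μ : ℝ}
    (t T P : ℕ → A) (a : ℕ → ℕ → A)
    (rel1 : ∀ i j, 1 ≤ i → i ≤ d → 1 ≤ j → j ≤ d → i ≠ j → star (t i) * t j = 0)
    (rel2 : ∀ i, 1 ≤ i → i ≤ d →
      star (t i) * t i = 1 - ∑ k ∈ Finset.Ico 1 i, t k * star (t k))
    (hP : ∀ j, P j = 1 - ∑ k ∈ Finset.Icc 1 j, t k * star (t k))
    (hTpos : ∀ i, 1 ≤ i → i ≤ d → 0 ≤ T i)
    (hTsq : ∀ i, 1 ≤ i → i ≤ d →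
      HasSum (fun n : ℕ => μ ^ (2 * n) • ((t i) ^ (n + 1) * star ((t i) ^ (n + 1))))
        (T i ^ 2))
    (haii : ∀ i, 1 ≤ i → i ≤ d → a i i = T i * t i)
    (haij : ∀ i j, 1 ≤ j → j < i → i ≤ d →
      HasSum (fun n : ℕ => μ ^ n • ((t j) ^ n * a i (j + 1) * star ((t j) ^ n)))
        (a i j)) :
    ∀ i j, 1 ≤ j → j < i → i ≤ d → P j * a i j = a i (j + 1) := by
  intro i j hj hji hid
  have hkill : ∀ k, 1 ≤ k → k ≤ j → star (t k) * a i (j + 1) = 0 := fun k hk hkj =>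
    star_mul_a_eq_zero rel1 (fun i hi hid => .of_nonneg (hTpos i hi hid)) hTsq haii haij
      (by omega) hid k hk (by omega)
  refine mul_eq_of_hasSum_conj (haij i j hj hji hid) ?_
    (P_mul_t_eq rel1 rel2 hP hj (by omega)) ?_ ?_
  · rw [hP, sub_mul, one_mul, sum_mul_star_mul_eq_zero fun k hk => ?_, sub_zero]
    obtain ⟨hk1, hkj⟩ := mem_Icc.mp hk
    exact hkill k hk1 hkj
  · refine sum_mul_star_mul_eq_zero fun k hk => ?_
    obtain ⟨hk1, hkj⟩ := mem_Ico.mp hk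
    exact hkill k hk1 hkj.le
  · refine sum_mul_star_mul_eq_zero fun k hk => ?_
    obtain ⟨hk1, hkj⟩ := mem_Ico.mp hk
    exact rel1 k j hk1 (by omega) hj (by omega) hkj.ne

/-- **Lemma 1.** For `1 ≤ j < i ≤ d`,
`(1 - t₁t₁* - ⋯ - tⱼtⱼ*) aᵢ⁽ʲ⁾ = aᵢ⁽ʲ⁺¹⁾`, i.e. `P j * aᵢ⁽ʲ⁾ = aᵢ⁽ʲ⁺¹⁾`. -/
theorem P_mul_a_lemma1 {A : Type*} [CStarAlgebra A] [PartialOrder A] [StarOrderedRing A]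
    {d : ℕ} (hd : 0 < d) {μ : ℝ} (hμ₁ : -1 < μ) (hμ₂ : μ < 1)
    (t T P : ℕ → A) (a : ℕ → ℕ → A)
    (rel1 : ∀ i j, 1 ≤ i → i ≤ d → 1 ≤ j → j ≤ d → i ≠ j → star (t i) * t j = 0)
    (rel2 : ∀ i, 1 ≤ i → i ≤ d →
      star (t i) * t i = 1 - ∑ k ∈ Finset.Ico 1 i, t k * star (t k))
    (rel3 : ∀ i j, 1 ≤ i → i < j → j ≤ d → t j * t i = 0)
    (hP : ∀ j, P j = 1 - ∑ k ∈ Finset.Icc 1 j, t k * star (t k))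
    (hTpos : ∀ i, 1 ≤ i → i ≤ d → 0 ≤ T i)
    (hTsq : ∀ i, 1 ≤ i → i ≤ d →
      HasSum (fun n : ℕ => μ ^ (2 * n) • ((t i) ^ (n + 1) * star ((t i) ^ (n + 1))))
        (T i ^ 2))
    (haii : ∀ i, 1 ≤ i → i ≤ d → a i i = T i * t i)
    (haij : ∀ i j, 1 ≤ j → j < i → i ≤ d →
      HasSum (fun n : ℕ => μ ^ n • ((t j) ^ n * a i (j + 1) * star ((t j) ^ n)))
        (a i j)) :
    ∀ i j, 1 ≤ j → j < i → i ≤ d → P j * a i j = a i (j + 1) :=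
  P_mul_a_lemma1_general t T P a rel1 rel2 hP hTpos hTsq haii haij
end

section
/- For all indices with 1 ≤ j < k ≤ i ≤ d one has (a_i^{(k)})^* a_j^{(j)} = 0. -/
/-!
The operators `t_j` with `j < k` are orthogonal to `t_k`, and this orthogonality survives
every operation building `a_i^{(k)}` from `t_k, …, t_i`: left multiplication by `t_j^*` kills
each term of the defining series, and it kills `T_k` because `T_k^2` is a series of terms
`t_k^{n+1} (t_k^{n+1})^*` and `T_k` is self-adjoint, so `‖T_k t_j‖^2 = ‖t_j^* T_k^2 t_j‖ = 0`.
Hence `t_j^* a_i^{(k)} = 0`, and taking adjoints, `(a_i^{(k)})^* T_j t_j = 0`.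
-/

section Series

variable {R : Type*} [Semiring R] [TopologicalSpace R] [IsTopologicalSemiring R] [T2Space R]

theorem HasSum.mul_left_eq_zero_s9 {ι : Type*} {f : ι → R} {s y : R} (hf : HasSum f s)
    (h : ∀ i, y * f i = 0) : y * s = 0 :=
  (hf.mul_left y).unique (by simpa only [h] using hasSum_zero)

variable [Algebra ℝ R] [StarRing R]

theorem mul_eq_zero_of_hasSum_smul_pow_mul_star_pow {c : ℕ → ℝ} {s b y x : R}
    (hs : y * s = 0) (hb : y * b = 0)
    (hx : HasSum (fun n => c n • (s ^ n * b * star (s ^ n))) x) : y * x = 0 := by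
  refine hx.mul_left_eq_zero_s9 fun n => ?_
  cases n with
  | zero => simp [hb]
  | succ n => rw [mul_smul_comm, pow_succ', mul_assoc, mul_assoc, ← mul_assoc y, hs, zero_mul,
      smul_zero]

theorem mul_eq_zero_of_hasSum_smul_pow_succ_mul_star {c : ℕ → ℝ} {s y x : R} (hs : y * s = 0)
    (hx : HasSum (fun n => c n • (s ^ (n + 1) * star (s ^ (n + 1)))) x) : y * x = 0 :=
  hx.mul_left_eq_zero_s9 fun n => by
    rw [mul_smul_comm, pow_succ', mul_assoc, ← mul_assoc y, hs, zero_mul, smul_zero]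

end Series

theorem IsSelfAdjoint.star_mul_eq_zero_of_star_mul_sq_eq_zero {A : Type*}
    [NormedRing A] [StarRing A] [CStarRing A] {T x : A} (hT : IsSelfAdjoint T)
    (h : star x * T ^ 2 = 0) : star x * T = 0 := by
  have hTx : T * x = 0 := by
    rw [← CStarRing.star_mul_self_eq_zero_iff, star_mul, hT.star_eq, mul_assoc,
      ← mul_assoc T, ← mul_assoc, ← sq, h, zero_mul]
  rw [← hT.star_eq, ← star_mul, hTx, star_zero]

theorem a_star_a_zero_general {A : Type*} [CStarAlgebra A] [PartialOrder A] [StarOrderedRing A]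
    {d : ℕ} {μ : ℝ}
    (t T : ℕ → A) (a : ℕ → ℕ → A)
    (rel1 : ∀ i j, 1 ≤ i → i ≤ d → 1 ≤ j → j ≤ d → i ≠ j → star (t i) * t j = 0)
    (hTpos : ∀ i, 1 ≤ i → i ≤ d → 0 ≤ T i)
    (hTsq : ∀ i, 1 ≤ i → i ≤ d →
      HasSum (fun n : ℕ => μ ^ (2 * n) • ((t i) ^ (n + 1) * star ((t i) ^ (n + 1))))
        (T i ^ 2))
    (haii : ∀ i, 1 ≤ i → i ≤ d → a i i = T i * t i)
    (haij : ∀ i j, 1 ≤ j → j < i → i ≤ d →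
      HasSum (fun n : ℕ => μ ^ n • ((t j) ^ n * a i (j + 1) * star ((t j) ^ n)))
        (a i j)) :
    ∀ i j k, 1 ≤ j → j < k → k ≤ i → i ≤ d → star (a i k) * a j j = 0 := by
  have hT : ∀ i x, 1 ≤ i → i ≤ d → star x * t i = 0 → star x * T i = 0 := fun i x hi hid hx =>
    IsSelfAdjoint.star_mul_eq_zero_of_star_mul_sq_eq_zero (.of_nonneg (hTpos i hi hid))
      (mul_eq_zero_of_hasSum_smul_pow_succ_mul_star hx (hTsq i hi hid))
  have hta : ∀ i j k, 1 ≤ j → j < k → k ≤ i → i ≤ d → star (t j) * a i k = 0 := by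
    intro i j k hj hjk hki hid
    induction hki using Nat.decreasingInduction with
    | self =>
      rw [haii i (by omega) hid, ← mul_assoc,
        hT i _ (by omega) hid (rel1 j i hj (by omega) (by omega) hid (by omega)), zero_mul]
    | of_succ k hki ih =>
      exact mul_eq_zero_of_hasSum_smul_pow_mul_star_pow
        (rel1 j k hj (by omega) (by omega) (by omega) (by omega)) (ih (by omega))
        (haij i k (by omega) hki hid)
  intro i j k hj hjk hki hid
  have hat : star (a i k) * t j = 0 := by
    simpa using congrArg star (hta i j k hj hjk hki hid)
  rw [haii j hj (by omega), ← mul_assoc, hT j _ hj (by omega) hat, zero_mul]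

/-- For `1 ≤ j < k ≤ i ≤ d`, `(aᵢ⁽ᵏ⁾)* aⱼ⁽ʲ⁾ = 0`. -/
theorem a_star_a_zero {A : Type*} [CStarAlgebra A] [PartialOrder A] [StarOrderedRing A]
    {d : ℕ} (hd : 0 < d) {μ : ℝ} (hμ₁ : -1 < μ) (hμ₂ : μ < 1)
    (t T P : ℕ → A) (a : ℕ → ℕ → A)
    (rel1 : ∀ i j, 1 ≤ i → i ≤ d → 1 ≤ j → j ≤ d → i ≠ j → star (t i) * t j = 0)
    (rel2 : ∀ i, 1 ≤ i → i ≤ d →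
      star (t i) * t i = 1 - ∑ k ∈ Finset.Ico 1 i, t k * star (t k))
    (rel3 : ∀ i j, 1 ≤ i → i < j → j ≤ d → t j * t i = 0)
    (hP : ∀ j, P j = 1 - ∑ k ∈ Finset.Icc 1 j, t k * star (t k))
    (hTpos : ∀ i, 1 ≤ i → i ≤ d → 0 ≤ T i)
    (hTsq : ∀ i, 1 ≤ i → i ≤ d →
      HasSum (fun n : ℕ => μ ^ (2 * n) • ((t i) ^ (n + 1) * star ((t i) ^ (n + 1))))
        (T i ^ 2))
    (haii : ∀ i, 1 ≤ i → i ≤ d → a i i = T i * t i)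
    (haij : ∀ i j, 1 ≤ j → j < i → i ≤ d →
      HasSum (fun n : ℕ => μ ^ n • ((t j) ^ n * a i (j + 1) * star ((t j) ^ n)))
        (a i j)) :
    ∀ i j k, 1 ≤ j → j < k → k ≤ i → i ≤ d → star (a i k) * a j j = 0 :=
  a_star_a_zero_general t T a rel1 hTpos hTsq haii haij
end
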